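/- arXiv:1601.01639 — 3 statements merged into one kernel-verified Lean document; each statement's English description precedes it below -/
import Mathlib

section
/- If ν₁ and ν₂ are compactly supported exact-dimensional Borel measures on ℝ of dimensions d₁ and d₂ respectively, and d₁ + d₂ < 1, then the convolution ν₁ ∗ ν₂ is singular with respect to Lebesgue measure. -/
open MeasureTheory Metric Filter Set

/-- `μ` is exact-dimensional of dimension `d`: for `μ`-a.e. `x`,
`log μ(B(x,ε)) / log ε → d` as `ε → 0⁺`. -/
def ExactDimensional (μ : Measure ℝ) (d : ℝ) : Prop :=
  ∀ᵐ x ∂μ, Tendsto (fun ε : ℝ => Real.log (μ (ball x ε)).toReal / Real.log ε)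
    (nhdsWithin 0 (Ioi 0)) (nhds d)

/-- The convolution of two measures on `ℝ`, i.e. the pushforward of the product
measure under addition. -/
noncomputable def conv (μ ν : Measure ℝ) : Measure ℝ :=
  Measure.map (fun p : ℝ × ℝ => p.1 + p.2) (μ.prod ν)

open Topology

/-! At `ν₁ × ν₂`-a.e. `(x, y)` exact dimensionality gives `νᵢ (B(·, ε)) ≥ ε ^ (dᵢ + δ)` for small
`ε`, and addition maps `B(x, ε/2) × B(y, ε/2)` into `B(x + y, ε)`; hence `μ = ν₁ ∗ ν₂` gives mass
at least `r ^ c` to `B(x + y, r)` for small `r`, with a fixed `c < 1`. By Besicovitch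
differentiation, `μ (B(z, r)) / 2r` has a finite limit at Lebesgue-a.e. `z`, so the points with this
lower bound form a Lebesgue-null set of full `μ`-measure. -/

theorem MeasureTheory.Measure.map_mutuallySingular_of_ae_mem {α β : Type*} [MeasurableSpace α]
    [MeasurableSpace β] {μ : Measure α} {ν : Measure β} {f : α → β} (hf : Measurable f)
    {s : Set β} (hμ : ∀ᵐ x ∂μ, f x ∈ s) (hν : ν s = 0) : μ.map f ⟂ₘ ν := by
  refine ⟨(toMeasurable ν s)ᶜ, (measurableSet_toMeasurable ν s).compl, ?_, ?_⟩
  · rw [Measure.map_apply hf (measurableSet_toMeasurable ν s).compl]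
    exact measure_mono_null
      (preimage_mono (compl_subset_compl.2 (subset_toMeasurable ν s))) hμ
  · rwa [compl_compl, measure_toMeasurable]

theorem eventually_rpow_le_mul_rpow {e c k : ℝ} (hec : e < c) (hk : 0 < k) :
    ∀ᶠ r in 𝓝[>] (0 : ℝ), r ^ c ≤ k * r ^ e := by
  have hlim : Tendsto (fun r : ℝ => r ^ (c - e)) (𝓝[>] 0) (𝓝 0) := by
    have := (Real.continuousAt_rpow_const 0 (c - e) (Or.inr (sub_pos.2 hec).le)).tendsto
    rw [Real.zero_rpow (sub_pos.2 hec).ne'] at this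
    exact this.mono_left nhdsWithin_le_nhds
  filter_upwards [hlim.eventually (gt_mem_nhds hk), eventually_mem_nhdsWithin]
    with r hr (hr0 : 0 < r)
  calc r ^ c = r ^ (c - e) * r ^ e := by rw [← Real.rpow_add hr0, sub_add_cancel]
    _ ≤ k * r ^ e := by gcongr

theorem volume_setOf_eventually_rpow_le_measure_closedBall (μ : Measure ℝ)
    [IsLocallyFiniteMeasure μ] {c : ℝ} (hc : c < 1) :
    volume {z : ℝ | ∀ᶠ r in 𝓝[>] 0, ENNReal.ofReal (r ^ c) ≤ μ (closedBall z r)} = 0 := by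
  refine measure_eq_zero_iff_ae_notMem.2 ?_
  filter_upwards [Besicovitch.ae_tendsto_rnDeriv μ volume, μ.rnDeriv_lt_top volume]
    with z hdensity hfinite hlower
  have hdensity_lt := hdensity.eventually
    (gt_mem_nhds (ENNReal.lt_add_right hfinite.ne one_ne_zero))
  have hblowup : Tendsto (fun r : ℝ => ENNReal.ofReal (r ^ (c - 1) / 2)) (𝓝[>] 0) (𝓝 ⊤) :=
    ENNReal.tendsto_ofReal_atTop.comp
      ((tendsto_rpow_neg_nhdsGT_zero (by linarith)).atTop_div_const two_pos)
  have hblowup_gt := hblowup.eventually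
    (lt_mem_nhds (ENNReal.add_lt_top.2 ⟨hfinite, ENNReal.one_lt_top⟩))
  obtain ⟨r, (hr0 : 0 < r), hbelow, habove, hlower_r⟩ :=
    (eventually_mem_nhdsWithin.and (hdensity_lt.and (hblowup_gt.and hlower))).exists
  have hratio : ENNReal.ofReal (r ^ (c - 1) / 2) ≤ μ (closedBall z r) / volume (closedBall z r) := by
    rw [Real.volume_closedBall, show r ^ (c - 1) / 2 = r ^ c / (2 * r) by
      rw [Real.rpow_sub_one hr0.ne']; field_simp, ENNReal.ofReal_div_of_pos (by positivity)]
    exact ENNReal.div_le_div_right hlower_r _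
  exact lt_asymm (habove.trans_le hratio) hbelow

theorem eventually_rpow_le_measure_ball {μ : Measure ℝ} [IsLocallyFiniteMeasure μ]
    {x d d' : ℝ} (hd : d < d') (hpos : ∀ r, 0 < r → 0 < μ (ball x r))
    (h : Tendsto (fun ε : ℝ => Real.log (μ (ball x ε)).toReal / Real.log ε)
      (𝓝[>] 0) (𝓝 d)) :
    ∀ᶠ ε in 𝓝[>] 0, ENNReal.ofReal (ε ^ d') ≤ μ (ball x ε) := by
  filter_upwards [h.eventually (gt_mem_nhds hd), Ioo_mem_nhdsGT zero_lt_one]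
    with ε hratio ⟨hε0, hε1⟩
  have hfin : μ (ball x ε) ≠ ⊤ := measure_ball_lt_top.ne
  have hm : 0 < (μ (ball x ε)).toReal := ENNReal.toReal_pos (hpos ε hε0).ne' hfin
  rw [div_lt_iff_of_neg (Real.log_neg hε0 hε1)] at hratio
  rw [ENNReal.ofReal_le_iff_le_toReal hfin, Real.rpow_def_of_pos hε0]
  exact ((Real.lt_log_iff_exp_lt hm).1 (by linarith)).le

theorem ExactDimensional.ae_eventually_rpow_le_measure_ball {μ : Measure ℝ}
    [IsLocallyFiniteMeasure μ] {d d' : ℝ} (h : ExactDimensional μ d) (hd : d < d') :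
    ∀ᵐ x ∂μ, ∀ᶠ ε in 𝓝[>] 0, ENNReal.ofReal (ε ^ d') ≤ μ (ball x ε) := by
  filter_upwards [h, μ.support_mem_ae] with x hx hsupp
  exact eventually_rpow_le_measure_ball hd
    (fun r hr => (μ.mem_support_iff_forall x).1 hsupp _ (ball_mem_nhds x hr)) hx

instance conv.instIsFiniteMeasure (μ ν : Measure ℝ) [IsFiniteMeasure μ] [IsFiniteMeasure ν] :
    IsFiniteMeasure (conv μ ν) := by
  unfold conv; infer_instance

theorem measure_ball_mul_measure_ball_le_conv (μ ν : Measure ℝ) [SFinite ν] (x y r s : ℝ) :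
    μ (ball x r) * ν (ball y s) ≤ conv μ ν (ball (x + y) (r + s)) := by
  rw [← Measure.prod_prod, conv, Measure.map_apply (by fun_prop) measurableSet_ball]
  refine measure_mono fun p ⟨hp₁, hp₂⟩ => ?_
  exact (dist_add_add_le _ _ _ _).trans_lt (add_lt_add hp₁ hp₂)

theorem eventually_rpow_le_conv_closedBall {μ ν : Measure ℝ} [SFinite ν] {x y a b c : ℝ}
    (habc : a + b < c)
    (hμ : ∀ᶠ ε in 𝓝[>] 0, ENNReal.ofReal (ε ^ a) ≤ μ (ball x ε))
    (hν : ∀ᶠ ε in 𝓝[>] 0, ENNReal.ofReal (ε ^ b) ≤ ν (ball y ε)) :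
    ∀ᶠ ε in 𝓝[>] 0, ENNReal.ofReal (ε ^ c) ≤ conv μ ν (closedBall (x + y) ε) := by
  have h2 : (0 : ℝ) < 2⁻¹ := by norm_num
  filter_upwards [eventually_nhdsGT_zero_mul_left h2 hμ, eventually_nhdsGT_zero_mul_left h2 hν,
    eventually_rpow_le_mul_rpow habc (Real.rpow_pos_of_pos h2 (a + b)), eventually_mem_nhdsWithin]
    with ε hεμ hεν hpow (hε : 0 < ε)
  have hε2 : 0 < 2⁻¹ * ε := mul_pos h2 hε
  calc ENNReal.ofReal (ε ^ c)
      ≤ ENNReal.ofReal ((2⁻¹ * ε) ^ a * (2⁻¹ * ε) ^ b) := by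
        rw [← Real.rpow_add hε2, Real.mul_rpow h2.le hε.le]
        exact ENNReal.ofReal_le_ofReal hpow
    _ = ENNReal.ofReal ((2⁻¹ * ε) ^ a) * ENNReal.ofReal ((2⁻¹ * ε) ^ b) :=
        ENNReal.ofReal_mul (Real.rpow_nonneg hε2.le _)
    _ ≤ μ (ball x (2⁻¹ * ε)) * ν (ball y (2⁻¹ * ε)) := mul_le_mul' hεμ hεν
    _ ≤ conv μ ν (ball (x + y) (2⁻¹ * ε + 2⁻¹ * ε)) := measure_ball_mul_measure_ball_le_conv ..
    _ ≤ conv μ ν (closedBall (x + y) ε) := by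
        rw [← add_mul, show (2⁻¹ + 2⁻¹ : ℝ) = 1 by norm_num, one_mul]
        exact measure_mono ball_subset_closedBall

theorem singular_convolution_of_exactDimensional_general
    (ν₁ ν₂ : Measure ℝ) [IsFiniteMeasure ν₁] [IsFiniteMeasure ν₂]
    (d₁ d₂ : ℝ) (h₁ : ExactDimensional ν₁ d₁) (h₂ : ExactDimensional ν₂ d₂)
    (hd : d₁ + d₂ < 1) :
    Measure.MutuallySingular (conv ν₁ ν₂) volume := by
  obtain ⟨δ, hδ, hδ1⟩ : ∃ δ > 0, d₁ + d₂ + 3 * δ < 1 :=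
    ⟨(1 - (d₁ + d₂)) / 4, by linarith, by linarith⟩
  have hlower : ∀ᵐ p ∂ν₁.prod ν₂, p.1 + p.2 ∈
      {z | ∀ᶠ r in 𝓝[>] 0, ENNReal.ofReal (r ^ (1 - δ)) ≤ conv ν₁ ν₂ (closedBall z r)} := by
    filter_upwards [Measure.quasiMeasurePreserving_fst.ae
        (h₁.ae_eventually_rpow_le_measure_ball (lt_add_of_pos_right d₁ hδ)),
      Measure.quasiMeasurePreserving_snd.ae
        (h₂.ae_eventually_rpow_le_measure_ball (lt_add_of_pos_right d₂ hδ))] with p hp₁ hp₂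
    exact eventually_rpow_le_conv_closedBall (by linarith) hp₁ hp₂
  exact Measure.map_mutuallySingular_of_ae_mem (by fun_prop) hlower
    (volume_setOf_eventually_rpow_le_measure_closedBall _ (by linarith))

theorem singular_convolution_of_exactDimensional
    (ν₁ ν₂ : Measure ℝ) [IsFiniteMeasure ν₁] [IsFiniteMeasure ν₂]
    (K₁ K₂ : Set ℝ) (hK₁ : IsCompact K₁) (hK₂ : IsCompact K₂)
    (hs₁ : ν₁ K₁ᶜ = 0) (hs₂ : ν₂ K₂ᶜ = 0)
    (d₁ d₂ : ℝ) (h₁ : ExactDimensional ν₁ d₁) (h₂ : ExactDimensional ν₂ d₂)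
    (hd : d₁ + d₂ < 1) :
    Measure.MutuallySingular (conv ν₁ ν₂) volume :=
  singular_convolution_of_exactDimensional_general ν₁ ν₂ d₁ d₂ h₁ h₂ hd
end

section
/- Let ν₁, ν₂ be finite Borel measures on ℝ and let ν = ν₁ ∗ ν₂ be their convolution. If the product measure ν₁ × ν₂ has lower local dimension at most D at (ν₁ × ν₂)-almost every point, then for ν-almost every x ∈ ℝ, the lower local dimension of ν at x is at most D. -/
/-!
By Besicovitch differentiation against Lebesgue measure, at `ν₁ × ν₂`-almost every point `p` the
mass of `B(p, r)` is at least `r ^ 3` for small `r`. This keeps the liminf defining the local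
dimension away from its junk value, so `lowerLocalDim ≤ D` at `p` means that for every `c > D`,
`(ν₁ × ν₂)(B(p, ε)) > ε ^ c` for arbitrarily small `ε`. Addition maps `B(p, ε)` into
`B(p.1 + p.2, 2ε)`, so `ν₁ ∗ ν₂` has the same property at `p.1 + p.2` for every larger exponent.
To push the almost-everywhere statement forward along addition, the property is required only for
rational exponents and radii, which makes the set of such points measurable.
-/

open MeasureTheory Metric Filter Set

/-- The lower local dimension of a measure at a point. -/
noncomputable def lowerLocalDim {X : Type*} [MetricSpace X] [MeasurableSpace X]
    (μ : Measure X) (x : X) : ℝ :=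
  liminf (fun ε : ℝ => Real.log (μ (ball x ε)).toReal / Real.log ε)
    (nhdsWithin 0 (Ioi 0))

open scoped Topology NNReal ENNReal

lemma log_div_log_lt_iff {ε m c : ℝ} (hε₀ : 0 < ε) (hε₁ : ε < 1) (hm : 0 < m) :
    Real.log m / Real.log ε < c ↔ ε ^ c < m := by
  rw [div_lt_iff_of_neg (Real.log_neg hε₀ hε₁), ← Real.log_rpow hε₀,
    Real.log_lt_log_iff (by positivity) hm]

lemma eventually_mul_rpow_le {c' c : ℝ} (hc : c' < c) {K : ℝ} (hK : 0 < K) :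
    ∀ᶠ ε in 𝓝[>] (0 : ℝ), (K * ε) ^ c ≤ ε ^ c' := by
  have hlim : Tendsto (fun ε : ℝ => K ^ c * ε ^ (c - c')) (𝓝[>] 0) (𝓝 0) := by
    have := (Real.continuousAt_rpow_const 0 (c - c') (Or.inr (sub_nonneg.2 hc.le))).tendsto
    rw [Real.zero_rpow (sub_ne_zero.2 hc.ne')] at this
    simpa using (this.mono_left nhdsWithin_le_nhds).const_mul (K ^ c)
  filter_upwards [hlim.eventually_le_const one_pos, self_mem_nhdsWithin] with ε hle hε
  calc (K * ε) ^ c = K ^ c * ε ^ (c - c') * ε ^ c' := by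
        rw [Real.mul_rpow hK.le (le_of_lt hε), mul_assoc, ← Real.rpow_add hε, sub_add_cancel]
    _ ≤ ε ^ c' := by
        simpa using mul_le_mul_of_nonneg_right hle (Real.rpow_nonneg (le_of_lt hε) c')

section LocalDimension

variable {X : Type*} [MetricSpace X] [MeasurableSpace X]

lemma isBoundedUnder_ge_log_measure_ball_div_log (μ : Measure X) [IsFiniteMeasure μ] (x : X) :
    IsBoundedUnder (· ≥ ·) (𝓝[>] 0)
      fun ε => Real.log (μ (ball x ε)).toReal / Real.log ε := by
  refine isBoundedUnder_of_eventually_ge (a := -(μ univ).toReal) ?_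
  filter_upwards [Ioo_mem_nhdsGT (Real.exp_pos (-1))] with ε ⟨hε₀, hε₁⟩
  have hlog : Real.log ε < -1 := (Real.log_lt_iff_lt_exp hε₀).2 hε₁
  have hball : Real.log (μ (ball x ε)).toReal ≤ (μ univ).toReal :=
    (Real.log_le_self ENNReal.toReal_nonneg).trans
      (ENNReal.toReal_mono (measure_ne_top μ univ) (measure_mono (subset_univ _)))
  rw [le_div_iff_of_neg (by linarith)]
  nlinarith [(μ univ).toReal_nonneg]

lemma lowerLocalDim_le_of_frequently_rpow_lt {μ : Measure X} [IsFiniteMeasure μ] {x : X} {D : ℝ}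
    (h : ∀ c : ℚ, D < c → ∃ᶠ ε in 𝓝[>] 0, ε ^ (c : ℝ) < (μ (ball x ε)).toReal) :
    lowerLocalDim μ x ≤ D := by
  refine le_of_forall_lt_rat_imp_le fun c hc => ?_
  refine liminf_le_of_frequently_le ?_ (isBoundedUnder_ge_log_measure_ball_div_log μ x)
  refine ((h c hc).and_eventually (Ioo_mem_nhdsGT one_pos)).mono fun ε ⟨hlt, hε₀, hε₁⟩ => ?_
  exact ((log_div_log_lt_iff hε₀ hε₁ ((Real.rpow_pos_of_pos hε₀ _).trans hlt)).2 hlt).le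

lemma frequently_rpow_lt_of_lowerLocalDim_le {μ : Measure X} {x : X} {b D c : ℝ}
    (hb : ∀ᶠ ε in 𝓝[>] 0, ε ^ b < (μ (ball x ε)).toReal) (hD : lowerLocalDim μ x ≤ D)
    (hc : D < c) : ∃ᶠ ε in 𝓝[>] 0, ε ^ c < (μ (ball x ε)).toReal := by
  have hsmall : ∀ᶠ ε : ℝ in 𝓝[>] 0, ε ∈ Ioo 0 1 ∧ ε ^ b < (μ (ball x ε)).toReal :=
    Eventually.and (Ioo_mem_nhdsGT one_pos) hb
  have hpos : ∀ {ε : ℝ}, ε ∈ Ioo 0 1 → ε ^ b < (μ (ball x ε)).toReal →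
      0 < (μ (ball x ε)).toReal :=
    fun hε hlt => (Real.rpow_pos_of_pos hε.1 b).trans hlt
  -- the eventual lower bound `ε ^ b` on the mass keeps the liminf from being a junk value
  have hcob : IsCoboundedUnder (· ≥ ·) (𝓝[>] 0)
      fun ε => Real.log (μ (ball x ε)).toReal / Real.log ε :=
    (isBoundedUnder_of_eventually_le (a := b) <| hsmall.mono fun ε ⟨hε, hlt⟩ =>
      ((log_div_log_lt_iff hε.1 hε.2 (hpos hε hlt)).2 hlt).le).isCoboundedUnder_flip
  exact ((frequently_lt_of_liminf_lt hcob (hD.trans_lt hc)).and_eventually hsmall).mono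
    fun ε ⟨hF, hε, hlt⟩ => (log_div_log_lt_iff hε.1 hε.2 (hpos hε hlt)).1 hF

lemma measurable_measure_ball [SecondCountableTopology X] [OpensMeasurableSpace X]
    (μ : Measure X) [SFinite μ] (r : ℝ) : Measurable fun x => μ (ball x r) :=
  measurable_measure_prodMk_left
    (isOpen_lt (continuous_snd.dist continuous_fst) continuous_const).measurableSet

end LocalDimension

lemma ae_exists_le_mul_measure_closedBall {β : Type*} [MetricSpace β] [MeasurableSpace β]
    [BorelSpace β] [SecondCountableTopology β] [HasBesicovitchCovering β]
    (ρ μ : Measure β) [IsLocallyFiniteMeasure μ] [IsLocallyFiniteMeasure ρ] :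
    ∀ᵐ x ∂μ, ∃ C : ℝ≥0, ∀ᶠ r in 𝓝[>] 0, ρ (closedBall x r) ≤ C * μ (closedBall x r) := by
  filter_upwards [Besicovitch.ae_tendsto_rnDeriv ρ μ, Measure.rnDeriv_lt_top ρ μ] with x hx hlt
  lift ρ.rnDeriv μ x to ℝ≥0 using hlt.ne with d
  have hd : (d : ℝ≥0∞) < (d + 1 : ℝ≥0) := by exact_mod_cast lt_add_one d
  refine ⟨d + 1, (hx.eventually_lt_const hd).mono fun r hr => ?_⟩
  exact (ENNReal.div_le_iff_le_mul (Or.inr ENNReal.coe_ne_top) (Or.inr (by positivity))).1 hr.le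

lemma ae_eventually_rpow_lt_measure_ball (μ : Measure (ℝ × ℝ)) [IsFiniteMeasure μ] :
    ∀ᵐ p ∂μ, ∀ᶠ r in 𝓝[>] 0, r ^ (3 : ℝ) < (μ (ball p r)).toReal := by
  filter_upwards [ae_exists_le_mul_measure_closedBall volume μ] with p ⟨C, hC⟩
  have hhalf : Tendsto (· / 2) (𝓝[>] (0 : ℝ)) (𝓝[>] 0) :=
    tendsto_nhdsWithin_iff.2
      ⟨by simpa using ((continuous_id.div_const (2 : ℝ)).tendsto 0).mono_left nhdsWithin_le_nhds,
        eventually_mem_nhdsWithin.mono fun _ hr => mem_Ioi.2 (half_pos hr)⟩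
  have hC₁ : (0 : ℝ) < 1 / (C + 1) := by positivity
  filter_upwards [hhalf.eventually hC, Ioo_mem_nhdsGT hC₁] with r hr ⟨hr₀, hr₁⟩
  -- in the sup metric of `ℝ × ℝ`, `closedBall p (r / 2)` is a square of area `r ^ 2`
  have hvol : volume (closedBall p (r / 2)) = ENNReal.ofReal r * ENNReal.ofReal r := by
    rw [← closedBall_prod_same, Measure.volume_eq_prod, Measure.prod_prod, Real.volume_closedBall,
      Real.volume_closedBall, mul_div_cancel₀ r two_ne_zero]
  have hsq : r * r ≤ C * (μ (ball p r)).toReal := by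
    have hle : ENNReal.ofReal r * ENNReal.ofReal r ≤ C * μ (ball p r) := by
      rw [← hvol]
      exact hr.trans (by gcongr; exact closedBall_subset_ball (half_lt_self hr₀))
    simpa [ENNReal.toReal_mul, hr₀.le] using ENNReal.toReal_mono (by finiteness) hle
  rw [lt_div_iff₀ (by positivity)] at hr₁
  rw [Real.rpow_ofNat]
  by_contra! hm
  have hr₂ : r * r ≤ C * r ^ 3 := hsq.trans (mul_le_mul_of_nonneg_left hm C.coe_nonneg)
  nlinarith [mul_pos hr₀ hr₀]

lemma prod_measure_ball_le_conv_ball (ν₁ ν₂ : Measure ℝ) (p : ℝ × ℝ) (r : ℝ) :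
    ν₁.prod ν₂ (ball p r) ≤ conv ν₁ ν₂ (ball (p.1 + p.2) (2 * r)) := by
  rw [conv, Measure.map_apply (by fun_prop) measurableSet_ball]
  refine measure_mono fun q hq => ?_
  rw [mem_ball, Prod.dist_eq, max_lt_iff] at hq
  calc dist (q.1 + q.2) (p.1 + p.2) ≤ dist q.1 p.1 + dist q.2 p.2 := dist_add_add_le _ _ _ _
    _ < 2 * r := by linarith [hq.1, hq.2]

instance isFiniteMeasure_conv (ν₁ ν₂ : Measure ℝ) [IsFiniteMeasure ν₁] [IsFiniteMeasure ν₂] :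
    IsFiniteMeasure (conv ν₁ ν₂) := by
  unfold conv
  infer_instance

/-- A measurable stand-in for `{x | lowerLocalDim μ x ≤ D}`. -/
def lowerDimLeRat (μ : Measure ℝ) (D : ℝ) : Set ℝ :=
  {x | ∀ c : ℚ, D < c → ∀ δ : ℚ, 0 < δ →
    ∃ q : ℚ, 0 < q ∧ q < δ ∧ (q : ℝ) ^ (c : ℝ) < (μ (ball x q)).toReal}

lemma measurableSet_lowerDimLeRat (μ : Measure ℝ) [SFinite μ] (D : ℝ) :
    MeasurableSet (lowerDimLeRat μ D) := by
  have hball (c q : ℚ) : MeasurableSet {x | (q : ℝ) ^ (c : ℝ) < (μ (ball x q)).toReal} :=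
    measurableSet_lt measurable_const (measurable_measure_ball μ q).ennreal_toReal
  simp only [lowerDimLeRat, ofPred_forall, ofPred_exists, ofPred_and]
  exact .iInter fun c => .iInter fun _ => .iInter fun δ => .iInter fun _ => .iUnion fun q =>
    (MeasurableSet.const _).inter ((MeasurableSet.const _).inter (hball c q))

lemma lowerLocalDim_le_of_mem_lowerDimLeRat {μ : Measure ℝ} [IsFiniteMeasure μ] {D x : ℝ}
    (hx : x ∈ lowerDimLeRat μ D) : lowerLocalDim μ x ≤ D := by
  refine lowerLocalDim_le_of_frequently_rpow_lt fun c hc => ?_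
  refine ((nhdsGT_basis 0).frequently_iff).2 fun δ hδ => ?_
  obtain ⟨δ', hδ'₀, hδ'⟩ := exists_rat_btwn hδ
  obtain ⟨q, hq₀, hqδ, hq⟩ := hx c hc δ' (by exact_mod_cast hδ'₀)
  exact ⟨q, ⟨by exact_mod_cast hq₀, (by exact_mod_cast hqδ : (q : ℝ) < δ').trans hδ'⟩, hq⟩

lemma add_mem_lowerDimLeRat_conv (ν₁ ν₂ : Measure ℝ) [IsFiniteMeasure ν₁] [IsFiniteMeasure ν₂]
    {p : ℝ × ℝ} {D : ℝ}
    (h : ∀ c, D < c → ∃ᶠ ε in 𝓝[>] 0, ε ^ c < (ν₁.prod ν₂ (ball p ε)).toReal) :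
    p.1 + p.2 ∈ lowerDimLeRat (conv ν₁ ν₂) D := by
  intro c hc δ hδ
  obtain ⟨c', hDc', hc'⟩ := exists_between hc
  have hsmall : ∀ᶠ ε : ℝ in 𝓝[>] 0,
      ε ∈ Ioo 0 ((δ : ℝ) / 3) ∧ (2 * ε) ^ (c : ℝ) ≤ ε ^ c' ∧ (3 * ε) ^ (c : ℝ) ≤ ε ^ c' := by
    filter_upwards [Ioo_mem_nhdsGT (by positivity : (0 : ℝ) < (δ : ℝ) / 3),
      eventually_mul_rpow_le hc' two_pos, eventually_mul_rpow_le hc' three_pos] with ε h₁ h₂ h₃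
      using ⟨h₁, h₂, h₃⟩
  obtain ⟨ε, hε, ⟨hε₀, hεδ⟩, h₂, h₃⟩ :=
    ((h c' hDc').and_eventually hsmall).exists
  obtain ⟨q, hq₂, hq₃⟩ := exists_rat_btwn (by linarith : 2 * ε < 3 * ε)
  have hq₀ : (0 : ℝ) < q := by linarith
  refine ⟨q, by exact_mod_cast hq₀, by exact_mod_cast (by linarith : (q : ℝ) < δ), ?_⟩
  have hqc : (q : ℝ) ^ (c : ℝ) ≤ ε ^ c' := by
    rcases le_total 0 (c : ℝ) with hc₀ | hc₀
    · exact (Real.rpow_le_rpow (by positivity) hq₃.le hc₀).trans h₃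
    · exact (Real.rpow_le_rpow_of_nonpos (by positivity) hq₂.le hc₀).trans h₂
  calc (q : ℝ) ^ (c : ℝ) ≤ ε ^ c' := hqc
    _ < (ν₁.prod ν₂ (ball p ε)).toReal := hε
    _ ≤ (conv ν₁ ν₂ (ball (p.1 + p.2) q)).toReal := by
      refine ENNReal.toReal_mono (measure_ne_top _ _) ?_
      exact (prod_measure_ball_le_conv_ball ν₁ ν₂ p ε).trans
        (measure_mono (ball_subset_ball hq₂.le))

theorem lowerLocalDim_conv_le
    (ν₁ ν₂ : Measure ℝ) [IsFiniteMeasure ν₁] [IsFiniteMeasure ν₂] (D : ℝ)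
    (h : ∀ᵐ p ∂(ν₁.prod ν₂), lowerLocalDim (ν₁.prod ν₂) p ≤ D) :
    ∀ᵐ x ∂(conv ν₁ ν₂), lowerLocalDim (conv ν₁ ν₂) x ≤ D := by
  have hgood : ∀ᵐ p ∂(ν₁.prod ν₂), p.1 + p.2 ∈ lowerDimLeRat (conv ν₁ ν₂) D := by
    filter_upwards [h, ae_eventually_rpow_lt_measure_ball (ν₁.prod ν₂)] with p hp hb
    exact add_mem_lowerDimLeRat_conv ν₁ ν₂ fun c hc =>
      frequently_rpow_lt_of_lowerLocalDim_le hb hp hc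
  have hconv : ∀ᵐ x ∂(conv ν₁ ν₂), x ∈ lowerDimLeRat (conv ν₁ ν₂) D :=
    (ae_map_iff (by fun_prop) (measurableSet_lowerDimLeRat _ D)).2 hgood
  exact hconv.mono fun x hx => lowerLocalDim_le_of_mem_lowerDimLeRat hx
end

section
/- For a finite Borel measure μ on ℝ^d, the upper Hausdorff dimension dim_H⁺(μ) = inf{dim_H(S) : μ(ℝ^d \ S) = 0} satisfies dim_H⁺(μ) ≤ esssup of the lower local dimension α⁻_μ with respect to μ. -/
/-!
Let `α` be the essential supremum and `t > α`. Off a `μ`-null set, a point `x` has lower local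
dimension at most `α`, lies in the support of `μ`, and is not *thin*, i.e.
`μ (B(x, r)) > r ^ (n + 1)` for arbitrarily small `r`; thin points form a null set by
Besicovitch's differentiation theorem comparing `μ` with Lebesgue measure. The last two conditions
make `log μ (B(x, r)) / log r` finite and frequently bounded, so that the real-valued `liminf` is a
genuine one rather than the junk value `0`. At such points `μ (B(x, r)) ≥ r ^ t` for arbitrarily
small `r`, and the mass distribution principle (a Vitali covering by disjoint balls of this kind,
enlarged four times) bounds the `t`-dimensional Hausdorff measure of the good set by
`8 ^ t μ univ < ∞`.
-/

open MeasureTheory Metric Filter Set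
open scoped Topology ENNReal NNReal

section Besicovitch

variable {X : Type*} [MetricSpace X] [SecondCountableTopology X] [MeasurableSpace X]
  [BorelSpace X] [HasBesicovitchCovering X]

theorem measure_le_of_frequently_measure_closedBall_le (μ ν : Measure X) [SFinite μ]
    [IsLocallyFiniteMeasure ν] {s : Set X}
    (hs : ∀ x ∈ s, ∃ᶠ r in 𝓝[>] 0, μ (closedBall x r) ≤ ν (closedBall x r)) : μ s ≤ ν s :=
  (Besicovitch.vitaliFamily μ).measure_le_of_frequently_le ν Measure.AbsolutelyContinuous.rfl s
    fun x hx => (Besicovitch.tendsto_filterAt μ x).frequently (hs x hx)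

theorem measure_eq_zero_of_frequently_measure_closedBall_le_mul (μ ν : Measure X) [SFinite μ]
    [IsLocallyFiniteMeasure ν] {s : Set X}
    (hs : ∀ c : ℝ≥0, 0 < c → ∀ x ∈ s,
      ∃ᶠ r in 𝓝[>] 0, μ (closedBall x r) ≤ c * ν (closedBall x r)) : μ s = 0 := by
  refine measure_null_of_locally_null s fun x _ => ?_
  obtain ⟨U, hU, hνU⟩ := ν.finiteAt_nhds x
  refine ⟨s ∩ U, inter_mem_nhdsWithin s hU, le_antisymm ?_ bot_le⟩
  have hle : ∀ c : ℝ≥0, 0 < c → μ (s ∩ U) ≤ c * ν U := fun c hc =>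
    calc μ (s ∩ U) ≤ (c • ν) (s ∩ U) :=
          measure_le_of_frequently_measure_closedBall_le μ (c • ν) fun y hy => hs c hc y hy.1
      _ ≤ c * ν U := measure_mono inter_subset_right
  have hlim : Tendsto (fun c : ℝ≥0 => (c : ℝ≥0∞) * ν U) (𝓝[>] 0) (𝓝 0) := by
    have hc : Tendsto (fun c : ℝ≥0 => (c : ℝ≥0∞)) (𝓝[>] 0) (𝓝 0) :=
      (ENNReal.continuous_coe.tendsto' 0 0 ENNReal.coe_zero).mono_left nhdsWithin_le_nhds
    simpa using ENNReal.Tendsto.mul_const hc (Or.inr hνU.ne)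
  exact ge_of_tendsto hlim (eventually_mem_nhdsWithin.mono hle)

end Besicovitch

theorem eventually_mul_rpow_le_mul_pow {d : ℕ} {s : ℝ} (hds : (d : ℝ) < s) (k : ℝ) {a : ℝ}
    (ha : 0 < a) : ∀ᶠ r in 𝓝[>] 0, k * r ^ s ≤ a * r ^ d := by
  have hlim : Tendsto (fun r : ℝ => k * r ^ (s - d)) (𝓝[>] 0) (𝓝 0) := by
    have := (Real.continuousAt_rpow_const 0 (s - d) (Or.inr (by linarith))).tendsto
    rw [Real.zero_rpow (by linarith)] at this
    simpa using (tendsto_nhdsWithin_of_tendsto_nhds this).const_mul k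
  filter_upwards [eventually_mem_nhdsWithin, hlim.eventually (gt_mem_nhds ha)] with r hr hsmall
  have hr : (0 : ℝ) < r := hr
  calc k * r ^ s = k * r ^ (s - d) * r ^ d := by
        rw [mul_assoc, ← Real.rpow_natCast, ← Real.rpow_add hr, sub_add_cancel]
    _ ≤ a * r ^ d := by gcongr

section FiniteDimensional

variable {E : Type*} [NormedAddCommGroup E] [NormedSpace ℝ E] [FiniteDimensional ℝ E]
  [MeasurableSpace E] [BorelSpace E]

theorem ae_frequently_rpow_lt_measure_ball (μ : Measure E) [SFinite μ] {s : ℝ}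
    (hs : Module.finrank ℝ E < s) :
    ∀ᵐ x ∂μ, ∃ᶠ r in 𝓝[>] 0, ENNReal.ofReal (r ^ s) < μ (ball x r) := by
  simp only [ae_iff, not_frequently, not_lt]
  refine measure_eq_zero_of_frequently_measure_closedBall_le_mul μ Measure.addHaar
    fun c hc x hx => Eventually.frequently ?_
  set κ := (Measure.addHaar : Measure E) (ball 0 1)
  have hκ : 0 < ((c : ℝ≥0∞) * κ).toReal :=
    ENNReal.toReal_pos (mul_ne_zero (by exact_mod_cast hc.ne') (measure_ball_pos _ _ one_pos).ne')
      (ENNReal.mul_ne_top ENNReal.coe_ne_top measure_ball_lt_top.ne)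
  have hdouble : ∀ᶠ r in 𝓝[>] 0, μ (ball x (2 * r)) ≤ ENNReal.ofReal ((2 * r) ^ s) :=
    (tendsto_nhdsWithin_of_tendsto_nhds_of_eventually_within _
      (((continuous_const_mul 2).tendsto' 0 0 (mul_zero 2)).mono_left nhdsWithin_le_nhds)
      (eventually_mem_nhdsWithin.mono fun r (hr : 0 < r) => mul_pos two_pos hr)).eventually hx
  filter_upwards [eventually_mem_nhdsWithin, hdouble,
    eventually_mul_rpow_le_mul_pow hs (2 ^ s) hκ] with r hr hball hpow
  have hr : (0 : ℝ) < r := hr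
  calc μ (closedBall x r) ≤ μ (ball x (2 * r)) :=
        measure_mono (closedBall_subset_ball (by linarith))
    _ ≤ ENNReal.ofReal ((2 * r) ^ s) := hball
    _ ≤ ENNReal.ofReal (((c : ℝ≥0∞) * κ).toReal * r ^ Module.finrank ℝ E) := by
        rw [Real.mul_rpow zero_le_two hr.le]; exact ENNReal.ofReal_le_ofReal hpow
    _ = c * Measure.addHaar (closedBall x r) := by
        rw [Measure.addHaar_closedBall _ _ hr.le, ENNReal.ofReal_mul ENNReal.toReal_nonneg,
          ENNReal.ofReal_toReal (ENNReal.mul_ne_top ENNReal.coe_ne_top measure_ball_lt_top.ne)]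
        ring

end FiniteDimensional

theorem ediam_closedBall_le {X : Type*} [PseudoMetricSpace X] (x : X) {r : ℝ} (hr : 0 ≤ r) :
    ediam (closedBall x r) ≤ ENNReal.ofReal (2 * r) := by
  rw [ENNReal.ofReal_mul zero_le_two, ENNReal.ofReal_ofNat, ← closedEBall_ofReal hr]
  exact ediam_closedEBall_le

section MassDistribution

variable {X : Type*} [MetricSpace X] [SecondCountableTopology X] [MeasurableSpace X]
  [BorelSpace X]

theorem exists_closedBall_cover_tsum_ediam_rpow_le (μ : Measure X) {A : Set X} {t : ℝ}
    (ht : 0 ≤ t) (hA : ∀ x ∈ A, ∃ᶠ r in 𝓝[>] 0, ENNReal.ofReal (r ^ t) ≤ μ (closedBall x r))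
    {δ : ℝ} (hδ : 0 < δ) :
    ∃ (u : Set X) (r : X → ℝ), u.Countable ∧
      (∀ x ∈ u, ediam (closedBall x (r x)) ≤ ENNReal.ofReal δ) ∧ A ⊆ ⋃ x ∈ u, closedBall x (r x) ∧
      ∑' x : u, ediam (closedBall (x : X) (r x)) ^ t ≤ ENNReal.ofReal (8 ^ t) * μ univ := by
  have hrad : ∀ x ∈ A, ∃ ρ ∈ Ioo 0 (δ / 8), ENNReal.ofReal (ρ ^ t) ≤ μ (closedBall x ρ) :=
    fun x hx => ((hA x hx).and_eventually (Ioo_mem_nhdsGT (by positivity))).exists.imp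
      fun ρ h => ⟨h.2, h.1⟩
  choose! ρ hρ hmass using hrad
  obtain ⟨u, huA, hdisj, hcov⟩ := Vitali.exists_disjoint_subfamily_covering_enlargement_closedBall
    A id ρ (δ / 8) (fun x hx => (hρ x hx).2.le) 4 (by norm_num)
  simp only [id] at hdisj hcov
  have hu : u.Countable := hdisj.countable_of_nonempty_interior fun x hx =>
    (nonempty_ball.2 (hρ x (huA hx)).1).mono ball_subset_interior_closedBall
  have hdiam : ∀ x ∈ u, ediam (closedBall x (4 * ρ x)) ^ t ≤
      ENNReal.ofReal (8 ^ t) * μ (closedBall x (ρ x)) := fun x hx => by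
    have hρ0 := (hρ x (huA hx)).1
    calc ediam (closedBall x (4 * ρ x)) ^ t ≤ ENNReal.ofReal (2 * (4 * ρ x)) ^ t :=
          ENNReal.rpow_le_rpow (ediam_closedBall_le x (by positivity)) ht
      _ = ENNReal.ofReal ((2 * (4 * ρ x)) ^ t) := ENNReal.ofReal_rpow_of_nonneg (by positivity) ht
      _ = ENNReal.ofReal (8 ^ t) * ENNReal.ofReal (ρ x ^ t) := by
          rw [← ENNReal.ofReal_mul (by positivity), ← Real.mul_rpow (by norm_num) hρ0.le]
          ring_nf
      _ ≤ ENNReal.ofReal (8 ^ t) * μ (closedBall x (ρ x)) := by gcongr; exact hmass x (huA hx)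
  refine ⟨u, fun x => 4 * ρ x, hu, fun x hx => ?_, fun x hx => ?_, ?_⟩
  · obtain ⟨hρ0, hρδ⟩ := hρ x (huA hx)
    exact (ediam_closedBall_le x (by positivity)).trans (ENNReal.ofReal_le_ofReal (by linarith))
  · obtain ⟨b, hb, hsub⟩ := hcov x hx
    exact mem_biUnion hb (hsub (mem_closedBall_self (hρ x hx).1.le))
  · have := hu.to_subtype
    calc ∑' x : u, ediam (closedBall (x : X) (4 * ρ x)) ^ t
        ≤ ∑' x : u, ENNReal.ofReal (8 ^ t) * μ (closedBall (x : X) (ρ x)) :=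
          ENNReal.tsum_le_tsum fun x => hdiam x x.2
      _ = ENNReal.ofReal (8 ^ t) * μ (⋃ x ∈ u, closedBall x (ρ x)) := by
          rw [ENNReal.tsum_mul_left, measure_biUnion hu hdisj fun x _ => measurableSet_closedBall]
      _ ≤ ENNReal.ofReal (8 ^ t) * μ univ := by gcongr; exact subset_univ _

theorem hausdorffMeasure_le_of_frequently_rpow_le_measure_closedBall (μ : Measure X) {A : Set X}
    {t : ℝ} (ht : 0 ≤ t)
    (hA : ∀ x ∈ A, ∃ᶠ r in 𝓝[>] 0, ENNReal.ofReal (r ^ t) ≤ μ (closedBall x r)) :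
    μH[t] A ≤ ENNReal.ofReal (8 ^ t) * μ univ := by
  choose u r hu hdiam hcov hsum using fun m : ℕ =>
    exists_closedBall_cover_tsum_ediam_rpow_le μ ht hA (Nat.one_div_pos_of_nat (n := m))
  have := fun m => (hu m).to_subtype
  calc μH[t] A ≤ liminf (fun m => ∑' x : u m, ediam (closedBall (x : X) (r m x)) ^ t) atTop :=
        Measure.hausdorffMeasure_le_liminf_tsum t A (fun m : ℕ => ENNReal.ofReal (1 / (m + 1)))
          (by simpa using ENNReal.tendsto_ofReal tendsto_one_div_add_atTop_nhds_zero_nat)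
          (fun m (x : u m) => closedBall (x : X) (r m x)) (.of_forall fun m x => hdiam m x x.2)
          (.of_forall fun m => by rw [iUnion_coe_set]; exact hcov m)
    _ ≤ ENNReal.ofReal (8 ^ t) * μ univ := liminf_le_of_frequently_le' (.of_forall hsum)

theorem dimH_le_of_frequently_rpow_le_measure_closedBall (μ : Measure X) [IsFiniteMeasure μ]
    {A : Set X} {t : ℝ≥0}
    (hA : ∀ x ∈ A, ∃ᶠ r in 𝓝[>] 0, ENNReal.ofReal (r ^ (t : ℝ)) ≤ μ (closedBall x r)) :
    dimH A ≤ t :=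
  dimH_le_of_hausdorffMeasure_ne_top <| ne_top_of_le_ne_top
    (ENNReal.mul_ne_top ENNReal.ofReal_ne_top (measure_ne_top μ univ))
    (hausdorffMeasure_le_of_frequently_rpow_le_measure_closedBall μ t.2 hA)

end MassDistribution

theorem frequently_rpow_le_measure_ball_of_lowerLocalDim_lt {X : Type*} [MetricSpace X]
    [MeasurableSpace X] {μ : Measure X} [IsFiniteMeasure μ] {x : X} {s t : ℝ}
    (hx : x ∈ μ.support) (hs : ∃ᶠ r in 𝓝[>] 0, ENNReal.ofReal (r ^ s) < μ (ball x r))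
    (ht : lowerLocalDim μ x < t) :
    ∃ᶠ r in 𝓝[>] 0, ENNReal.ofReal (r ^ t) ≤ μ (ball x r) := by
  have hlog : ∀ᶠ r in 𝓝[>] 0, ∀ u : ℝ, ENNReal.ofReal (r ^ u) ≤ μ (ball x r) ↔
      Real.log (μ (ball x r)).toReal / Real.log r ≤ u := by
    filter_upwards [Ioo_mem_nhdsGT one_pos] with r ⟨hr0, hr1⟩ u
    have hpos : 0 < (μ (ball x r)).toReal := ENNReal.toReal_pos
      ((Measure.mem_support_iff_forall x).1 hx _ (ball_mem_nhds x hr0)).ne' (measure_ne_top μ _)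
    rw [ENNReal.ofReal_le_iff_le_toReal (measure_ne_top μ _), Real.rpow_le_iff_le_log hr0 hpos,
      div_le_iff_of_neg (Real.log_neg hr0 hr1)]
  have hcobdd : IsCoboundedUnder (· ≥ ·) (𝓝[>] 0)
      fun r => Real.log (μ (ball x r)).toReal / Real.log r :=
    .of_frequently_le (hs.mp (hlog.mono fun r h hr => (h s).1 hr.le))
  exact (frequently_lt_of_liminf_lt hcobdd ht).mp (hlog.mono fun r h hr => (h t).2 hr.le)

theorem upper_hausdorff_dim_le_esssup_lowerLocalDim
    (n : ℕ) (μ : Measure (Fin n → ℝ)) [IsFiniteMeasure μ] :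
    (⨅ (S : Set (Fin n → ℝ)) (_ : μ Sᶜ = 0), dimH S)
      ≤ essSup (fun x => ENNReal.ofReal (lowerLocalDim μ x)) μ := by
  set α := essSup (fun x => ENNReal.ofReal (lowerLocalDim μ x)) μ
  set S := {x | ENNReal.ofReal (lowerLocalDim μ x) ≤ α ∧ x ∈ μ.support ∧
    ∃ᶠ r in 𝓝[>] 0, ENNReal.ofReal (r ^ ((n : ℝ) + 1)) < μ (ball x r)}
  have hS : μ Sᶜ = 0 := by
    rw [← mem_ae_iff]
    filter_upwards [ENNReal.ae_le_essSup fun x => ENNReal.ofReal (lowerLocalDim μ x),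
      Measure.support_mem_ae, ae_frequently_rpow_lt_measure_ball μ (s := n + 1) (by simp)]
      with x hxα hxμ hxs using ⟨hxα, hxμ, hxs⟩
  refine (iInf₂_le S hS).trans (le_of_forall_gt_imp_ge_of_dense fun c hc => ?_)
  obtain ⟨t, hαt, htc⟩ := ENNReal.lt_iff_exists_nnreal_btwn.1 hc
  refine (dimH_le_of_frequently_rpow_le_measure_closedBall μ fun x hx => ?_).trans htc.le
  obtain ⟨hxα, hxμ, hxs⟩ := hx
  have hlt : lowerLocalDim μ x < t := by
    rw [← ENNReal.ofReal_coe_nnreal] at hαt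
    exact (ENNReal.ofReal_lt_ofReal_iff'.1 (hxα.trans_lt hαt)).1
  exact (frequently_rpow_le_measure_ball_of_lowerLocalDim_lt hxμ hxs hlt).mono
    fun r hr => hr.trans (measure_mono ball_subset_closedBall)
end
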